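/- Monotonicity of Bloom filter false positives: for fixed m ≥ 1 and k ≥ 1, the false-positive probability p_{k,n,m} = m^{−k(n+1)} Σ_{i=1}^m i^k · i! · C(m,i) · S(kn,i) is monotonically non-decreasing in the number n of stored elements. -/

import Mathlib

/-- Stirling numbers of the second kind. -/
def stirling2 : ℕ → ℕ → ℕ
  | 0, 0 => 1
  | 0, _ + 1 => 0
  | _ + 1, 0 => 0
  | n + 1, k + 1 => (k + 1) * stirling2 n (k + 1) + stirling2 n k

/-- The Bloom filter false-positive probability
`p_{k,n,m} = m^{-k(n+1)} Σ_{i=1}^m i^k · i! · C(m,i) · S(kn,i)`. -/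
noncomputable def bloomFP (k n m : ℕ) : ENNReal :=
  ((∑ i ∈ Finset.Icc 1 m,
      i ^ k * i.factorial * m.choose i * stirling2 (k * n) i : ℕ) : ENNReal) /
    ((m : ENNReal) ^ (k * (n + 1)))

/-!
Write `d_i = m(m-1)⋯(m-i+1)` and `F(t) = ∑_{i ≤ m} i^k · d_i · S(t, i)`, so that
`p_{k,n,m} = F(kn) / m^{k(n+1)}`. As `d_i · S(t, i)` counts the maps `[t] → [m]` with image of size
`i`, `F(t)` sums `(#image)^k` over all maps; one more point in the domain multiplies the number of
maps by `m` and never shrinks an image, whence `m · F(t) ≤ F(t + 1)`. Algebraically: by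
`S(t+1, i) = i · S(t, i) + S(t, i-1)` and `d_{i+1} = (m - i) · d_i`, the coefficient of `S(t, i)` in
`F(t + 1)` is `(i · i^k + (m - i) · (i+1)^k) · d_i ≥ m · i^k · d_i`. Iterating `k` times gives
`m^k · F(kn) ≤ F(k(n+1))`, i.e. `p_{k,n,m} ≤ p_{k,n+1,m}`.
-/
open Finset ENNReal

/-- `m.descFactorial i * stirling2 t i` counts the maps `Fin t → Fin m` whose image has `i`
elements, so this is `∑ f : Fin t → Fin m, w #(range f)`. -/
def imageWeightSum (w : ℕ → ℕ) (m t : ℕ) : ℕ :=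
  ∑ i ∈ range (m + 1), w i * m.descFactorial i * stirling2 t i

theorem sum_mul_stirling2_succ (c : ℕ → ℕ) (t N : ℕ) :
    ∑ i ∈ range (N + 1), c i * stirling2 (t + 1) i + c (N + 1) * stirling2 t N =
      ∑ i ∈ range (N + 1), (i * c i + c (i + 1)) * stirling2 t i := by
  induction N with
  | zero => simp [stirling2]
  | succ N ih =>
    rw [sum_range_succ, sum_range_succ _ (N + 1), ← ih]
    simp only [stirling2]
    ring

theorem mul_le_mul_descFactorial_add {w : ℕ → ℕ} (hw : Monotone w) (m i : ℕ) :
    m * (w i * m.descFactorial i) ≤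
      i * (w i * m.descFactorial i) + w (i + 1) * m.descFactorial (i + 1) := by
  have hgrow : (m - i) * (w i * m.descFactorial i) ≤ w (i + 1) * m.descFactorial (i + 1) := by
    rw [Nat.descFactorial_succ, mul_left_comm]
    exact Nat.mul_le_mul_right _ (hw i.le_succ)
  calc m * (w i * m.descFactorial i)
      ≤ (i + (m - i)) * (w i * m.descFactorial i) := Nat.mul_le_mul_right _ (by omega)
    _ ≤ i * (w i * m.descFactorial i) + w (i + 1) * m.descFactorial (i + 1) := by
      rw [add_mul]
      exact Nat.add_le_add_left hgrow _

theorem mul_imageWeightSum_le_succ {w : ℕ → ℕ} (hw : Monotone w) (m t : ℕ) :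
    m * imageWeightSum w m t ≤ imageWeightSum w m (t + 1) := by
  have hvanish : w (m + 1) * m.descFactorial (m + 1) * stirling2 t m = 0 := by simp
  have hrec := sum_mul_stirling2_succ (fun i => w i * m.descFactorial i) t m
  simp only [hvanish, add_zero] at hrec
  rw [imageWeightSum, imageWeightSum, hrec, mul_sum]
  refine sum_le_sum fun i _ => ?_
  rw [← mul_assoc]
  exact Nat.mul_le_mul_right _ (mul_le_mul_descFactorial_add hw m i)

theorem pow_mul_imageWeightSum_le_add {w : ℕ → ℕ} (hw : Monotone w) (m t c : ℕ) :
    m ^ c * imageWeightSum w m t ≤ imageWeightSum w m (t + c) := by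
  induction c with
  | zero => simp
  | succ c ih =>
    calc m ^ (c + 1) * imageWeightSum w m t = m * (m ^ c * imageWeightSum w m t) := by ring
      _ ≤ m * imageWeightSum w m (t + c) := Nat.mul_le_mul_left _ ih
      _ ≤ imageWeightSum w m (t + (c + 1)) := mul_imageWeightSum_le_succ hw m (t + c)

theorem sum_Icc_eq_imageWeightSum_pow {k : ℕ} (hk : k ≠ 0) (m t : ℕ) :
    ∑ i ∈ Icc 1 m, i ^ k * i.factorial * m.choose i * stirling2 t i =
      imageWeightSum (· ^ k) m t := by
  calc ∑ i ∈ Icc 1 m, i ^ k * i.factorial * m.choose i * stirling2 t i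
      = ∑ i ∈ Icc 1 m, i ^ k * m.descFactorial i * stirling2 t i :=
        sum_congr rfl fun i _ => by
          rw [Nat.descFactorial_eq_factorial_mul_choose, mul_assoc (i ^ k)]
    _ = imageWeightSum (· ^ k) m t := by
        refine sum_subset (fun i _ => by grind) fun i _ hi => ?_
        obtain rfl : i = 0 := by grind
        simp [hk]

theorem ENNReal.div_pow_le_div_pow_add {a b x : ℝ≥0∞} (hx₀ : x ≠ 0) (hx : x ≠ ⊤) {e c : ℕ}
    (h : x ^ c * a ≤ b) : a / x ^ e ≤ b / x ^ (e + c) :=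
  calc a / x ^ e = x ^ c * a / (x ^ c * x ^ e) :=
        (ENNReal.mul_div_mul_left _ _ (pow_ne_zero _ hx₀) (pow_ne_top hx)).symm
    _ ≤ b / x ^ (e + c) := by
        rw [← pow_add, add_comm c]
        exact ENNReal.div_le_div_right h _

/-- For fixed `m ≥ 1` and `k ≥ 1`, the Bloom filter false-positive probability
is monotonically non-decreasing in the number `n` of stored elements. -/
theorem bloomFP_monotone (m k : ℕ) (hm : 1 ≤ m) (hk : 1 ≤ k) :
    Monotone (fun n => bloomFP k n m) := by
  refine monotone_nat_of_le_succ fun n => ?_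
  have hnum : m ^ k * imageWeightSum (· ^ k) m (k * n) ≤ imageWeightSum (· ^ k) m (k * (n + 1)) :=
    mul_add_one k n ▸ pow_mul_imageWeightSum_le_add (pow_left_mono k) m (k * n) k
  simp only [bloomFP, sum_Icc_eq_imageWeightSum_pow (k := k) (by omega)]
  rw [show k * (n + 1 + 1) = k * (n + 1) + k by ring]
  refine ENNReal.div_pow_le_div_pow_add (by exact_mod_cast (by omega : m ≠ 0)) (natCast_ne_top m) ?_
  exact_mod_cast hnum
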